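/- arXiv:2009.01082 — 3 statements merged into one kernel-verified Lean document; each statement's English description precedes it below -/
import Mathlib

section
/- Let d ≥ 1 and M = 2^d, let N̂ = Σ_{n=0}^{M−1} n |n⟩⟨n| be the number operator and P̂ = Σ_{m=0}^{M−1} (2πm/M) |θ_m⟩⟨θ_m| the Pegg–Barnett phase operator. Then the commutator [N̂, P̂] = N̂P̂ − P̂N̂ has number-basis entries ⟨k|[N̂,P̂]|l⟩ = (2π/M²)(k−l) Σ_{r=0}^{M−1} r · exp(2πi r (k−l)/M); moreover [N̂, P̂] is a skew-Hermitian Toeplitz matrix, i.e., its (k,l) entry depends only on the integer difference k−l, and its conjugate transpose equals its negative. -/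
open Matrix

/-- The number operator `N̂ = ∑ n |n⟩⟨n|` on `ℂ^M`. -/
noncomputable def numOp (M : ℕ) : Matrix (Fin M) (Fin M) ℂ :=
  Matrix.diagonal fun n => ((n : ℕ) : ℂ)

/-- The phase state `|θ_m⟩ = M^{-1/2} ∑ exp(i θ_m n) |n⟩` with `θ_m = 2πm/M`. -/
noncomputable def phaseState (M : ℕ) (m : Fin M) : Fin M → ℂ :=
  fun n =>
    Complex.exp (Complex.I * ((2 * Real.pi * (m : ℕ) / M : ℝ) : ℂ) * ((n : ℕ) : ℂ)) /
      ((Real.sqrt M : ℝ) : ℂ)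

/-- The Pegg–Barnett phase operator `P̂ = ∑ θ_m |θ_m⟩⟨θ_m|`. -/
noncomputable def phaseOp (M : ℕ) : Matrix (Fin M) (Fin M) ℂ :=
  ∑ m : Fin M,
    ((2 * Real.pi * (m : ℕ) / M : ℝ) : ℂ) •
      Matrix.vecMulVec (phaseState M m) (star (phaseState M m))

/-!
Since `N̂` is diagonal, `[N̂, P̂]ₖₗ = (k - l) P̂ₖₗ`, and expanding the phase states gives
`P̂ₖₗ = M⁻² ∑ₘ 2πm exp(2πim(k - l)/M)`, a function of `k - l` alone. Complex conjugation turns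
this Toeplitz symbol at `j` into minus the symbol at `-j`, which is skew-Hermiticity.
-/

open Complex
open scoped Real

theorem Matrix.diagonal_mul_sub_mul_diagonal_apply {n R : Type*} [Fintype n] [DecidableEq n]
    [CommRing R] (d : n → R) (A : Matrix n n R) (i j : n) :
    (diagonal d * A - A * diagonal d) i j = (d i - d j) * A i j := by
  rw [sub_apply, diagonal_mul, mul_diagonal]
  ring

lemma phaseState_mul_star_phaseState (M : ℕ) (m k l : Fin M) :
    phaseState M m k * star (phaseState M m l)
      = exp (2 * π * I * (m : ℕ) * ((k : ℕ) - (l : ℕ)) / M) / M := by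
  have hsqrt : ((Real.sqrt M : ℝ) : ℂ) * ((Real.sqrt M : ℝ) : ℂ) = M := by
    rw [← ofReal_mul, Real.mul_self_sqrt (Nat.cast_nonneg M), ofReal_natCast]
  simp only [phaseState, star_div₀, ← Complex.exp_conj, Complex.star_def, map_mul, conj_I,
    conj_ofReal, conj_natCast]
  rw [div_mul_div_comm, ← exp_add, hsqrt]
  congr 2
  push_cast
  ring

lemma phaseOp_apply (M : ℕ) (k l : Fin M) :
    phaseOp M k l
      = ∑ m : Fin M,
          2 * π * (m : ℕ) / M ^ 2 * exp (2 * π * I * (m : ℕ) * ((k : ℕ) - (l : ℕ)) / M) := by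
  simp only [phaseOp, Matrix.sum_apply, Matrix.smul_apply, vecMulVec_apply, Pi.star_apply,
    phaseState_mul_star_phaseState, smul_eq_mul]
  refine Finset.sum_congr rfl fun m _ => ?_
  push_cast
  ring

noncomputable def numberPhaseSymbol (M : ℕ) (j : ℤ) : ℂ :=
  2 * π / (M : ℂ) ^ 2 * j * ∑ r : Fin M, ((r : ℕ) : ℂ) * exp (2 * π * I * (r : ℕ) * j / M)

lemma numOp_mul_phaseOp_sub_apply (M : ℕ) (k l : Fin M) :
    (numOp M * phaseOp M - phaseOp M * numOp M) k l
      = numberPhaseSymbol M ((k : ℕ) - (l : ℕ)) := by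
  rw [numOp, diagonal_mul_sub_mul_diagonal_apply, phaseOp_apply, numberPhaseSymbol,
    Finset.mul_sum, Finset.mul_sum]
  push_cast
  refine Finset.sum_congr rfl fun m _ => ?_
  ring

lemma star_numberPhaseSymbol (M : ℕ) (j : ℤ) :
    star (numberPhaseSymbol M j) = -numberPhaseSymbol M (-j) := by
  simp only [numberPhaseSymbol, Complex.star_def, map_mul, map_sum, map_div₀, map_pow, map_ofNat,
    conj_ofReal, conj_natCast, map_intCast, ← Complex.exp_conj, conj_I, Int.cast_neg]
  rw [Finset.mul_sum, Finset.mul_sum, ← Finset.sum_neg_distrib]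
  refine Finset.sum_congr rfl fun r _ => ?_
  ring_nf

theorem number_phase_commutator_general (d : ℕ) :
    (∀ k l : Fin (2 ^ d),
        (numOp (2 ^ d) * phaseOp (2 ^ d) - phaseOp (2 ^ d) * numOp (2 ^ d)) k l
          = (2 * (Real.pi : ℂ) / ((2 ^ d : ℕ) : ℂ) ^ 2) *
              (((k : ℕ) : ℂ) - ((l : ℕ) : ℂ)) *
              ∑ r : Fin (2 ^ d),
                ((r : ℕ) : ℂ) *
                  Complex.exp (2 * (Real.pi : ℂ) * Complex.I * ((r : ℕ) : ℂ) *
                    (((k : ℕ) : ℂ) - ((l : ℕ) : ℂ)) / ((2 ^ d : ℕ) : ℂ)))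
      ∧ (∀ k l k' l' : Fin (2 ^ d),
          ((k : ℕ) : ℤ) - ((l : ℕ) : ℤ) = ((k' : ℕ) : ℤ) - ((l' : ℕ) : ℤ) →
            (numOp (2 ^ d) * phaseOp (2 ^ d) - phaseOp (2 ^ d) * numOp (2 ^ d)) k l
              = (numOp (2 ^ d) * phaseOp (2 ^ d) - phaseOp (2 ^ d) * numOp (2 ^ d)) k' l')
      ∧ (numOp (2 ^ d) * phaseOp (2 ^ d) - phaseOp (2 ^ d) * numOp (2 ^ d))ᴴ
          = -(numOp (2 ^ d) * phaseOp (2 ^ d) - phaseOp (2 ^ d) * numOp (2 ^ d)) := by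
  simp only [numOp_mul_phaseOp_sub_apply]
  refine ⟨fun k l => ?_, fun k l k' l' hkl => by rw [hkl], ?_⟩
  · rw [numberPhaseSymbol, Int.cast_sub, Int.cast_natCast, Int.cast_natCast]
  · ext k l
    rw [conjTranspose_apply, neg_apply, numOp_mul_phaseOp_sub_apply, numOp_mul_phaseOp_sub_apply,
      star_numberPhaseSymbol, neg_sub]

/-- the number–phase commutator `[N̂, P̂]` has entries
`(2π/M²)(k−l) ∑_r r exp(2πi r (k−l)/M)`, is Toeplitz, and is skew-Hermitian. -/
theorem number_phase_commutator (d : ℕ) (hd : 1 ≤ d) :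
    (∀ k l : Fin (2 ^ d),
        (numOp (2 ^ d) * phaseOp (2 ^ d) - phaseOp (2 ^ d) * numOp (2 ^ d)) k l
          = (2 * (Real.pi : ℂ) / ((2 ^ d : ℕ) : ℂ) ^ 2) *
              (((k : ℕ) : ℂ) - ((l : ℕ) : ℂ)) *
              ∑ r : Fin (2 ^ d),
                ((r : ℕ) : ℂ) *
                  Complex.exp (2 * (Real.pi : ℂ) * Complex.I * ((r : ℕ) : ℂ) *
                    (((k : ℕ) : ℂ) - ((l : ℕ) : ℂ)) / ((2 ^ d : ℕ) : ℂ)))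
      ∧ (∀ k l k' l' : Fin (2 ^ d),
          ((k : ℕ) : ℤ) - ((l : ℕ) : ℤ) = ((k' : ℕ) : ℤ) - ((l' : ℕ) : ℤ) →
            (numOp (2 ^ d) * phaseOp (2 ^ d) - phaseOp (2 ^ d) * numOp (2 ^ d)) k l
              = (numOp (2 ^ d) * phaseOp (2 ^ d) - phaseOp (2 ^ d) * numOp (2 ^ d)) k' l')
      ∧ (numOp (2 ^ d) * phaseOp (2 ^ d) - phaseOp (2 ^ d) * numOp (2 ^ d))ᴴ
          = -(numOp (2 ^ d) * phaseOp (2 ^ d) - phaseOp (2 ^ d) * numOp (2 ^ d)) :=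
  number_phase_commutator_general d
end

section
/- Let d ≥ 1, M = 2^d, and let f : {0, …, M−1} → {0,1} be any Boolean function with associated hypergraph state |G⟩ = M^{−1/2} Σ_{n=0}^{M−1} (−1)^{f(n)} |n⟩. Then for every integer k with 1 ≤ k ≤ M−1, the k-th normally ordered moment is m_k = ⟨G| (a†)^k a^k |G⟩ = Π_{j=1}^{k} j(2^d − j)/(j+1) = (1/(k+1)) · Π_{j=1}^{k} (2^d − j). In particular m_k depends only on d and k, not on f. -/
/-!
In the number basis `(a†)^k a^k` is diagonal with entries the falling factorials `n(n-1)⋯(n-k+1)`.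
Every amplitude of a hypergraph state has modulus `M^{-1/2}`, so the signs `(-1)^{f(n)}` drop out
and `m_k = M⁻¹ ∑_{n<M} n(n-1)⋯(n-k+1)`, which the hockey-stick identity sums to
`M(M-1)⋯(M-k) / ((k+1)M)`.
-/

open Matrix Finset

/-- The truncated annihilation operator on `ℂ^M`: `a |n⟩ = √n |n-1⟩`. -/
noncomputable def ann (M : ℕ) : Matrix (Fin M) (Fin M) ℂ :=
  Matrix.of fun k l => if (k : ℕ) + 1 = (l : ℕ) then ((Real.sqrt (l : ℕ) : ℝ) : ℂ) else 0

/-- The hypergraph state `|G⟩ = M^{-1/2} ∑ (-1)^(f n) |n⟩` for a Boolean function `f`. -/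
noncomputable def hgState (M : ℕ) (f : Fin M → Fin 2) : Fin M → ℂ :=
  fun n => (-1 : ℂ) ^ (f n : ℕ) / ((Real.sqrt M : ℝ) : ℂ)

theorem Nat.succ_mul_sum_range_descFactorial (M k : ℕ) :
    (k + 1) * ∑ n ∈ range M, n.descFactorial k = M.descFactorial (k + 1) := by
  induction M with
  | zero => simp
  | succ M ih =>
    rw [sum_range_succ, mul_add, ih, Nat.succ_descFactorial_succ, Nat.descFactorial_succ]
    rcases le_or_gt k M with h | h
    · rw [← add_mul]; congr 1; omega
    · simp [Nat.descFactorial_eq_zero_iff_lt.mpr h]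

theorem Nat.cast_descFactorial_succ_eq_mul_prod_Icc {R : Type*} [CommRing R] (M k : ℕ) :
    (M.descFactorial (k + 1) : R) = M * ∏ j ∈ Icc 1 k, ((M : R) - j) := by
  rw [← descPochhammer_eval_eq_descFactorial, descPochhammer_eval_eq_prod_range,
    prod_range_succ', ← Ico_add_one_right_eq_Icc, prod_Ico_eq_prod_range]
  simp [add_comm, mul_comm]

theorem prod_Icc_natCast_div_add_one {K : Type*} [Field K] [CharZero K] (k : ℕ) :
    ∏ j ∈ Icc 1 k, ((j : K) / (j + 1)) = 1 / (k + 1) := by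
  induction k with
  | zero => simp
  | succ k ih =>
    rw [prod_Icc_succ_top (by omega), ih]
    push_cast
    field_simp

theorem star_hgState_mul_self (M : ℕ) (f : Fin M → Fin 2) (n : Fin M) :
    star (hgState M f n) * hgState M f n = (M : ℂ)⁻¹ := by
  have hsq : ((-1 : ℂ) ^ (f n : ℕ)) ^ 2 = 1 := by rw [← pow_mul, mul_comm, pow_mul]; simp
  simp only [hgState, star_div₀, star_pow, star_neg, star_one, Complex.star_def, Complex.conj_ofReal]
  rw [div_mul_div_comm, ← sq, ← sq, hsq, ← Complex.ofReal_pow, Real.sq_sqrt (Nat.cast_nonneg _)]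
  simp

theorem ann_pow_apply (M k : ℕ) (m n : Fin M) :
    (ann M ^ k) m n =
      if (m : ℕ) + k = n then ((Real.sqrt ((n : ℕ).descFactorial k) : ℝ) : ℂ) else 0 := by
  induction k generalizing m n with
  | zero => simp [one_apply, Fin.ext_iff]
  | succ k ih =>
    rw [pow_succ, mul_apply]
    rcases Nat.eq_zero_or_pos n with hn | hn
    · refine (sum_eq_zero fun p _ => ?_).trans (if_neg (by omega)).symm
      simp [ann, hn]
    rw [Fintype.sum_eq_single ⟨n - 1, (Nat.sub_le _ _).trans_lt n.isLt⟩ fun p hp => ?_]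
    · rw [ih]
      simp only [ann, of_apply, Nat.sub_add_cancel hn, if_true, ite_mul, zero_mul]
      refine if_congr (by omega) ?_ rfl
      rw [← Complex.ofReal_mul, ← Real.sqrt_mul (Nat.cast_nonneg _), ← Nat.cast_mul, mul_comm]
      conv_rhs => rw [← Nat.sub_add_cancel hn, Nat.succ_descFactorial_succ, Nat.sub_add_cancel hn]
    · have : (p : ℕ) + 1 ≠ n := fun h => hp (Fin.ext (by simp; omega))
      simp [ann, this]

theorem conjTranspose_ann_pow_mul_ann_pow (M k : ℕ) :
    (ann M)ᴴ ^ k * ann M ^ k = diagonal fun n : Fin M => (((n : ℕ).descFactorial k : ℕ) : ℂ) := by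
  ext m n
  rw [← conjTranspose_pow, mul_apply, diagonal_apply]
  simp only [conjTranspose_apply, ann_pow_apply, apply_ite star, star_zero, Complex.star_def,
    Complex.conj_ofReal, ite_mul, zero_mul]
  split_ifs with hmn
  · subst hmn
    rcases lt_or_ge (m : ℕ) k with hkm | hkm
    · simp [Nat.descFactorial_eq_zero_iff_lt.mpr hkm]
    rw [Fintype.sum_eq_single ⟨m - k, (Nat.sub_le _ _).trans_lt m.isLt⟩ fun p hp => ?_]
    · rw [if_pos (Nat.sub_add_cancel hkm), if_pos (Nat.sub_add_cancel hkm), ← Complex.ofReal_mul,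
        Real.mul_self_sqrt (Nat.cast_nonneg _), Complex.ofReal_natCast]
    · have : (p : ℕ) + k ≠ m := fun h => hp (Fin.ext (by simp; omega))
      simp [this]
  · refine sum_eq_zero fun p _ => ?_
    have : ¬((p : ℕ) + k = m ∧ (p : ℕ) + k = n) := fun h => hmn (Fin.ext (by omega))
    grind

theorem hgState_normally_ordered_moment (M k : ℕ) (hM : M ≠ 0) (f : Fin M → Fin 2) :
    star (hgState M f) ⬝ᵥ (((ann M)ᴴ ^ k * ann M ^ k).mulVec (hgState M f))
      = 1 / ((k : ℂ) + 1) * ∏ j ∈ Icc 1 k, ((M : ℂ) - j) := by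
  calc star (hgState M f) ⬝ᵥ (((ann M)ᴴ ^ k * ann M ^ k).mulVec (hgState M f))
      = ∑ n : Fin M, ((n : ℕ).descFactorial k : ℂ) * (M : ℂ)⁻¹ := by
        simp only [conjTranspose_ann_pow_mul_ann_pow, dotProduct, mulVec_diagonal, Pi.star_apply,
          mul_left_comm _ (((_ : ℕ).descFactorial k : ℕ) : ℂ), star_hgState_mul_self]
    _ = (((k + 1) * ∑ n ∈ range M, n.descFactorial k : ℕ) : ℂ) / (M * (k + 1)) := by
        rw [Fin.sum_univ_eq_sum_range (fun n => (n.descFactorial k : ℂ) * (M : ℂ)⁻¹), ← sum_mul]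
        push_cast
        field_simp
    _ = 1 / ((k : ℂ) + 1) * ∏ j ∈ Icc 1 k, ((M : ℂ) - j) := by
        rw [Nat.succ_mul_sum_range_descFactorial, Nat.cast_descFactorial_succ_eq_mul_prod_Icc]
        field_simp

theorem hypergraph_normally_ordered_moments_general (d : ℕ)
    (f : Fin (2 ^ d) → Fin 2) (k : ℕ) :
    star (hgState (2 ^ d) f) ⬝ᵥ
        (((ann (2 ^ d))ᴴ ^ k * ann (2 ^ d) ^ k).mulVec (hgState (2 ^ d) f))
      = ∏ j ∈ Finset.Icc 1 k, ((j : ℂ) * ((2 ^ d : ℂ) - (j : ℂ)) / ((j : ℂ) + 1))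
    ∧ star (hgState (2 ^ d) f) ⬝ᵥ
        (((ann (2 ^ d))ᴴ ^ k * ann (2 ^ d) ^ k).mulVec (hgState (2 ^ d) f))
      = (1 / ((k : ℂ) + 1)) * ∏ j ∈ Finset.Icc 1 k, ((2 ^ d : ℂ) - (j : ℂ)) := by
  have h := hgState_normally_ordered_moment (2 ^ d) k (by positivity) f
  push_cast at h
  refine ⟨?_, h⟩
  rw [h, ← prod_Icc_natCast_div_add_one, ← prod_mul_distrib]
  exact prod_congr rfl fun j _ => (mul_div_right_comm _ _ _).symm

/-- for every `1 ≤ k ≤ 2^d − 1` the normally ordered moment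
`m_k = ⟨G| (a†)^k a^k |G⟩` equals `∏_{j=1}^k j(2^d − j)/(j+1) = (1/(k+1)) ∏_{j=1}^k (2^d − j)`,
independently of the Boolean function `f`. -/
theorem hypergraph_normally_ordered_moments (d : ℕ) (hd : 1 ≤ d)
    (f : Fin (2 ^ d) → Fin 2) (k : ℕ) (hk1 : 1 ≤ k) (hk2 : k ≤ 2 ^ d - 1) :
    star (hgState (2 ^ d) f) ⬝ᵥ
        (((ann (2 ^ d))ᴴ ^ k * ann (2 ^ d) ^ k).mulVec (hgState (2 ^ d) f))
      = ∏ j ∈ Finset.Icc 1 k, ((j : ℂ) * ((2 ^ d : ℂ) - (j : ℂ)) / ((j : ℂ) + 1))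
    ∧ star (hgState (2 ^ d) f) ⬝ᵥ
        (((ann (2 ^ d))ᴴ ^ k * ann (2 ^ d) ^ k).mulVec (hgState (2 ^ d) f))
      = (1 / ((k : ℂ) + 1)) * ∏ j ∈ Finset.Icc 1 k, ((2 ^ d : ℂ) - (j : ℂ)) :=
  hypergraph_normally_ordered_moments_general d f k
end

section
/- Let d = 3, M = 8, and let f : {0, …, 7} → {0,1} be any Boolean function with associated hypergraph state |G⟩. Set m_k = ⟨G| (a†)^k a^k |G⟩ and μ_k = ⟨G| N̂^k |G⟩ for k = 1, 2, 3, 4, and form the 3×3 moment matrices m^{(3)} = [[1, m₁, m₂],[m₁, m₂, m₃],[m₂, m₃, m₄]] and μ^{(3)} = [[1, μ₁, μ₂],[μ₁, μ₂, μ₃],[μ₂, μ₃, μ₄]]. Then det m^{(3)} = −245/4, det μ^{(3)} = 441/4, and the Agarwal–Tara parameter A₃ = det m^{(3)} / (det μ^{(3)} − det m^{(3)}) = −5/14 < 0, so every hypergraph state on 3 vertices is non-classical by the Agarwal–Tara criterion. -/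
open Matrix

/-!
In the number basis both `(a†)^k a^k` and `N̂^k` are diagonal, with entries the falling
factorials `n (n-1) ⋯ (n-k+1)` and the powers `n^k`. Every amplitude of a hypergraph state has
modulus `M^{-1/2}`, so each moment is the plain average of these entries over `n < M`,
whatever `f` is. For `M = 8` this gives `m = 7/2, 14, 105/2, 168` and
`μ = 7/2, 35/2, 98, 1169/2`, and the two `3 × 3` determinants are then arithmetic.
-/

open Finset

lemma Nat.descFactorial_succ_eq_mul_pred (n k : ℕ) :
    n.descFactorial (k + 1) = n * (n - 1).descFactorial k := by
  cases n with
  | zero => simp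
  | succ n => exact Nat.succ_descFactorial_succ n k

/-- At `n = 0` the factor `n` kills the truncated `d (0 - 1) = d 0`. -/
lemma ann_conjTranspose_mul_diagonal_mul_ann (M : ℕ) (d : ℕ → ℂ) :
    (ann M)ᴴ * (diagonal (fun n : Fin M => d n) * ann M) =
      diagonal (fun n : Fin M => (n : ℕ) * d ((n : ℕ) - 1)) := by
  ext ⟨_ | k, hk⟩ l
  · simp [mul_apply, ann, diagonal_apply]
  · rw [mul_apply, sum_eq_single ⟨k, by omega⟩]
    · simp only [conjTranspose_apply, ann, of_apply, diagonal_mul, diagonal_apply, if_true,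
        Complex.star_def, Complex.conj_ofReal, Fin.ext_iff]
      split_ifs with h
      · rw [← h, Nat.add_sub_cancel, mul_left_comm, ← Complex.ofReal_mul,
          Real.mul_self_sqrt (Nat.cast_nonneg _), Complex.ofReal_natCast, mul_comm]
      · simp
    · intro j _ hj
      simp [ann, Fin.ext_iff] at hj ⊢
      omega
    · simp

lemma ann_conjTranspose_pow_mul_ann_pow (M k : ℕ) :
    (ann M)ᴴ ^ k * ann M ^ k = diagonal (fun n : Fin M => ((n : ℕ).descFactorial k : ℂ)) := by
  induction k with
  | zero => simp [diagonal_one]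
  | succ k ih =>
    rw [pow_succ', pow_succ, mul_assoc, ← mul_assoc _ _ (ann M), ih,
      ann_conjTranspose_mul_diagonal_mul_ann M fun n => (n.descFactorial k : ℂ)]
    simp only [Nat.descFactorial_succ_eq_mul_pred, Nat.cast_mul]

lemma ann_conjTranspose_mul_ann (M : ℕ) :
    (ann M)ᴴ * ann M = diagonal (fun n : Fin M => ((n : ℕ) : ℂ)) := by
  simpa using ann_conjTranspose_pow_mul_ann_pow M 1

lemma star_hgState_dotProduct_diagonal_mulVec (M : ℕ) (f : Fin M → Fin 2) (d : Fin M → ℂ) :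
    star (hgState M f) ⬝ᵥ diagonal d *ᵥ hgState M f = (∑ n, d n) / M := by
  have hsqrt : ((Real.sqrt M : ℝ) : ℂ) * (Real.sqrt M : ℝ) = M := by
    rw [← Complex.ofReal_mul, Real.mul_self_sqrt (Nat.cast_nonneg _), Complex.ofReal_natCast]
  rw [sum_div]
  refine sum_congr rfl fun n _ => ?_
  have hsign : ((-1 : ℂ) ^ (f n : ℕ)) * (-1) ^ (f n : ℕ) = 1 := by
    rw [← mul_pow]; norm_num
  simp only [Pi.star_apply, mulVec_diagonal, hgState, star_div₀, star_pow, star_neg, star_one,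
    Complex.star_def, Complex.conj_ofReal]
  rw [div_eq_mul_inv _ (M : ℂ), ← hsqrt]
  linear_combination (d n * (Real.sqrt M : ℂ)⁻¹ ^ 2) * hsign

lemma normalMoment_hgState (M : ℕ) (f : Fin M → Fin 2) (k : ℕ) :
    star (hgState M f) ⬝ᵥ ((ann M)ᴴ ^ k * ann M ^ k) *ᵥ hgState M f =
      ((∑ n ∈ range M, n.descFactorial k : ℕ) : ℂ) / M := by
  rw [ann_conjTranspose_pow_mul_ann_pow, star_hgState_dotProduct_diagonal_mulVec,
    Nat.cast_sum, ← Fin.sum_univ_eq_sum_range]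

lemma numberMoment_hgState (M : ℕ) (f : Fin M → Fin 2) (k : ℕ) :
    star (hgState M f) ⬝ᵥ (((ann M)ᴴ * ann M) ^ k) *ᵥ hgState M f =
      ((∑ n ∈ range M, n ^ k : ℕ) : ℂ) / M := by
  rw [ann_conjTranspose_mul_ann, diagonal_pow, star_hgState_dotProduct_diagonal_mulVec,
    Nat.cast_sum, ← Fin.sum_univ_eq_sum_range]
  simp

/-- for `d = 3` (`M = 8`) and any Boolean function `f`, the 3×3
Agarwal–Tara moment matrices satisfy `det m⁽³⁾ = −245/4`, `det μ⁽³⁾ = 441/4`, and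
`A₃ = det m⁽³⁾/(det μ⁽³⁾ − det m⁽³⁾) = −5/14 < 0`, witnessing non-classicality. -/
theorem agarwal_tara_A3_d3 (f : Fin (2 ^ 3) → Fin 2) :
    let a := ann (2 ^ 3)
    let G := hgState (2 ^ 3) f
    let m : ℕ → ℂ := fun k => star G ⬝ᵥ ((aᴴ ^ k * a ^ k).mulVec G)
    let μ : ℕ → ℂ := fun k => star G ⬝ᵥ (((aᴴ * a) ^ k).mulVec G)
    let detm := Matrix.det !![1, m 1, m 2; m 1, m 2, m 3; m 2, m 3, m 4]
    let detμ := Matrix.det !![1, μ 1, μ 2; μ 1, μ 2, μ 3; μ 2, μ 3, μ 4]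
    detm = -245 / 4 ∧ detμ = 441 / 4
      ∧ detm / (detμ - detm) = -5 / 14 ∧ ((-5 : ℝ) / 14 < 0) := by
  intro a G m μ detm detμ
  obtain ⟨hm₁, hm₂, hm₃, hm₄⟩ : m 1 = 7 / 2 ∧ m 2 = 14 ∧ m 3 = 105 / 2 ∧ m 4 = 168 := by
    simp only [m, a, G, normalMoment_hgState]
    norm_num [sum_range_succ, Nat.descFactorial]
  obtain ⟨hμ₁, hμ₂, hμ₃, hμ₄⟩ : μ 1 = 7 / 2 ∧ μ 2 = 35 / 2 ∧ μ 3 = 98 ∧ μ 4 = 1169 / 2 := by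
    simp only [μ, a, G, numberMoment_hgState]
    norm_num [sum_range_succ]
  have hdetm : detm = -245 / 4 := by
    simp [detm, det_fin_three, hm₁, hm₂, hm₃, hm₄]
    norm_num
  have hdetμ : detμ = 441 / 4 := by
    simp [detμ, det_fin_three, hμ₁, hμ₂, hμ₃, hμ₄]
    norm_num
  refine ⟨hdetm, hdetμ, ?_, by norm_num⟩
  rw [hdetm, hdetμ]
  norm_num
end
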